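/- arXiv:2009.05464 — 3 statements merged into one kernel-verified Lean document; each statement's English description precedes it below -/
import Mathlib

section
/- Let n ≥ 2 and let F : ℝⁿ → ℝⁿ be a C¹ map. Suppose that 0 ∉ Spec(F) (i.e., for every x ∈ ℝⁿ no complex eigenvalue of JF(x) is zero) and that there exists ε > 0 such that either Spec(F+F^T) ⊆ (ε, +∞) (every eigenvalue of JF(x)+JF(x)^T is greater than ε for every x) or Spec(F+F^T) ⊆ (−∞, −ε) (every eigenvalue of JF(x)+JF(x)^T is less than −ε for every x). Then F is injective. -/
open Matrix

/-- The Jacobian matrix of a map `F : ℝⁿ → ℝⁿ` at a point `x`: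
the matrix of the total (Fréchet) derivative of `F` at `x` in the standard basis. -/
noncomputable def jacobianMatrix {n : ℕ} (F : (Fin n → ℝ) → (Fin n → ℝ)) (x : Fin n → ℝ) :
    Matrix (Fin n) (Fin n) ℝ :=
  LinearMap.toMatrix' (fderiv ℝ F x).toLinearMap

/-- `μ : ℂ` is a (complex) eigenvalue of the real matrix `A`. -/
def HasComplexEigenvalue {n : ℕ} (A : Matrix (Fin n) (Fin n) ℝ) (μ : ℂ) : Prop :=
  ∃ v : Fin n → ℂ, v ≠ 0 ∧ (A.map Complex.ofReal).mulVec v = μ • v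

/-- `μ : ℝ` is a (real) eigenvalue of the real matrix `A`. -/
def HasRealEigenvalue {n : ℕ} (A : Matrix (Fin n) (Fin n) ℝ) (μ : ℝ) : Prop :=
  ∃ v : Fin n → ℝ, v ≠ 0 ∧ A.mulVec v = μ • v

/-!
If the symmetric part `JF(x) + JF(x)ᵀ` is positive definite at every `x`, then
`v ⬝ᵥ JF(x) v > 0` for all `v ≠ 0`; hence for `a ≠ b` the function
`t ↦ (b - a) ⬝ᵥ F (a + t • (b - a))` has positive derivative, is strictly increasing,
and so `F a ≠ F b`. The negative definite case is the positive one for `-F`.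
-/

theorem HasRealEigenvalue.of_neg {n : ℕ} {A : Matrix (Fin n) (Fin n) ℝ} {μ : ℝ}
    (h : HasRealEigenvalue (-A) μ) : HasRealEigenvalue A (-μ) := by
  obtain ⟨v, hv, hAv⟩ := h
  exact ⟨v, hv, by rw [neg_smul, ← hAv, neg_mulVec, neg_neg]⟩

theorem Matrix.IsHermitian.posDef_of_hasRealEigenvalue_pos {n : ℕ}
    {A : Matrix (Fin n) (Fin n) ℝ} (hA : A.IsHermitian)
    (h : ∀ μ, HasRealEigenvalue A μ → 0 < μ) : A.PosDef :=
  hA.posDef_iff_eigenvalues_pos.mpr fun i =>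
    h _ ⟨_, by simpa using hA.eigenvectorBasis.orthonormal.ne_zero i,
      hA.mulVec_eigenvectorBasis i⟩

theorem Matrix.isHermitian_add_transpose {ι : Type*} (A : Matrix ι ι ℝ) :
    (A + Aᵀ).IsHermitian := by
  rw [IsHermitian, conjTranspose_eq_transpose_of_trivial, transpose_add, transpose_transpose,
    add_comm]

theorem Matrix.dotProduct_add_transpose_mulVec {ι : Type*} [Fintype ι] (A : Matrix ι ι ℝ)
    (v : ι → ℝ) : v ⬝ᵥ ((A + Aᵀ) *ᵥ v) = 2 * (v ⬝ᵥ (A *ᵥ v)) := by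
  rw [add_mulVec, dotProduct_add, mulVec_transpose, dotProduct_comm v (v ᵥ* A),
    ← dotProduct_mulVec]
  ring

theorem Matrix.PosDef.dotProduct_mulVec_pos_of_add_transpose {ι : Type*} [Fintype ι]
    {A : Matrix ι ι ℝ} (hA : (A + Aᵀ).PosDef) {v : ι → ℝ} (hv : v ≠ 0) : 0 < v ⬝ᵥ (A *ᵥ v) := by
  have := hA.dotProduct_mulVec_pos hv
  rw [star_trivial, dotProduct_add_transpose_mulVec] at this
  linarith

theorem jacobianMatrix_mulVec {n : ℕ} (F : (Fin n → ℝ) → (Fin n → ℝ)) (x v : Fin n → ℝ) :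
    jacobianMatrix F x *ᵥ v = fderiv ℝ F x v := by
  rw [jacobianMatrix, ← toLin'_apply, toLin'_toMatrix']
  rfl

theorem jacobianMatrix_neg {n : ℕ} (F : (Fin n → ℝ) → (Fin n → ℝ)) (x : Fin n → ℝ) :
    jacobianMatrix (-F) x = -jacobianMatrix F x := by
  rw [jacobianMatrix, jacobianMatrix, fderiv_neg, ContinuousLinearMap.toLinearMap_neg, map_neg]

theorem HasDerivAt.dotProduct_const_left {ι : Type*} [Fintype ι] {φ : ℝ → ι → ℝ} {φ' : ι → ℝ}
    {t : ℝ} (hφ : HasDerivAt φ φ' t) (v : ι → ℝ) :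
    HasDerivAt (fun s => v ⬝ᵥ φ s) (v ⬝ᵥ φ') t := by
  simpa [dotProduct] using HasDerivAt.fun_sum fun i _ => ((hasDerivAt_pi.1 hφ) i).const_mul (v i)

theorem injective_of_dotProduct_fderiv_pos {ι : Type*} [Fintype ι] {F : (ι → ℝ) → ι → ℝ}
    (hF : Differentiable ℝ F) (hpos : ∀ x v, v ≠ 0 → 0 < v ⬝ᵥ fderiv ℝ F x v) :
    Function.Injective F := by
  intro a b hab
  by_contra hne
  set v := b - a
  have hv : v ≠ 0 := sub_ne_zero.mpr (Ne.symm hne)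
  have hline (t : ℝ) : HasDerivAt (fun s : ℝ => a + s • v) v t := by
    simpa using ((hasDerivAt_id t).smul_const v).const_add a
  have hg (t : ℝ) :
      HasDerivAt (fun s : ℝ => v ⬝ᵥ F (a + s • v)) (v ⬝ᵥ fderiv ℝ F (a + t • v) v) t :=
    ((hF _).hasFDerivAt.comp_hasDerivAt t (hline t)).dotProduct_const_left v
  have hmono : StrictMono fun s : ℝ => v ⬝ᵥ F (a + s • v) :=
    strictMono_of_deriv_pos fun t => (hg t).deriv ▸ hpos _ v hv
  have := hmono zero_lt_one
  simp [v, hab] at this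

theorem injective_of_posDef_jacobianMatrix_add_transpose {n : ℕ} {F : (Fin n → ℝ) → Fin n → ℝ}
    (hF : Differentiable ℝ F) (hpos : ∀ x, (jacobianMatrix F x + (jacobianMatrix F x)ᵀ).PosDef) :
    Function.Injective F :=
  injective_of_dotProduct_fderiv_pos hF fun x v hv =>
    jacobianMatrix_mulVec F x v ▸ (hpos x).dotProduct_mulVec_pos_of_add_transpose hv

theorem injective_of_nonzero_spec_and_symmetric_spec_bounded_away_general
    {n : ℕ} (F : (Fin n → ℝ) → (Fin n → ℝ)) (hF : ContDiff ℝ 1 F)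
    (hsym : ∃ ε > (0 : ℝ),
      (∀ x : Fin n → ℝ, ∀ μ : ℝ,
          HasRealEigenvalue (jacobianMatrix F x + (jacobianMatrix F x)ᵀ) μ → ε < μ) ∨
      (∀ x : Fin n → ℝ, ∀ μ : ℝ,
          HasRealEigenvalue (jacobianMatrix F x + (jacobianMatrix F x)ᵀ) μ → μ < -ε)) :
    Function.Injective F := by
  have hdiff : Differentiable ℝ F := hF.differentiable one_ne_zero
  obtain ⟨ε, hε, hpos | hneg⟩ := hsym
  · exact injective_of_posDef_jacobianMatrix_add_transpose hdiff fun x =>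
      (isHermitian_add_transpose _).posDef_of_hasRealEigenvalue_pos fun μ hμ =>
        hε.trans (hpos x μ hμ)
  · have hnegF : Function.Injective (-F) :=
      injective_of_posDef_jacobianMatrix_add_transpose hdiff.neg fun x => by
        rw [jacobianMatrix_neg, transpose_neg, ← neg_add]
        exact (isHermitian_add_transpose _).neg.posDef_of_hasRealEigenvalue_pos fun μ hμ => by
          linarith [hneg x (-μ) hμ.of_neg]
    exact fun a b hab => hnegF (by simp [hab])

/-- If `F : ℝⁿ → ℝⁿ` (n ≥ 2) is `C¹`, no complex eigenvalue of `JF(x)` is zero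
for any `x`, and there is `ε > 0` such that either every eigenvalue of `JF(x)+JF(x)ᵀ` is
greater than `ε` for every `x`, or every eigenvalue of `JF(x)+JF(x)ᵀ` is less than `-ε`
for every `x`, then `F` is injective. -/
theorem injective_of_nonzero_spec_and_symmetric_spec_bounded_away
    {n : ℕ} (hn : 2 ≤ n) (F : (Fin n → ℝ) → (Fin n → ℝ)) (hF : ContDiff ℝ 1 F)
    (hspec : ∀ x : Fin n → ℝ, ∀ μ : ℂ, HasComplexEigenvalue (jacobianMatrix F x) μ → μ ≠ 0)
    (hsym : ∃ ε > (0 : ℝ),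
      (∀ x : Fin n → ℝ, ∀ μ : ℝ,
          HasRealEigenvalue (jacobianMatrix F x + (jacobianMatrix F x)ᵀ) μ → ε < μ) ∨
      (∀ x : Fin n → ℝ, ∀ μ : ℝ,
          HasRealEigenvalue (jacobianMatrix F x + (jacobianMatrix F x)ᵀ) μ → μ < -ε)) :
    Function.Injective F :=
  injective_of_nonzero_spec_and_symmetric_spec_bounded_away_general F hF hsym
end

section
/- Let n ≥ 2 and let G : ℝⁿ → ℝⁿ be a C¹ map such that det JG(X) ≠ 0 for every X ∈ ℝⁿ, G(0) = 0, and G(c) = 0 for some c ≠ 0. Define I(X) = ‖G(X)‖². Then there exist a real number c* > 0 and a sequence (X_k) in ℝⁿ with ‖X_k‖ → ∞, I(X_k) → c*, and ∇I(X_k) = 2 JG(X_k)^T G(X_k) → 0. -/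
/-!
Since `G` is a local diffeomorphism at `0`, `I = ‖G‖²` is bounded below by some `α > 0` on a
small sphere around `0`, which every path from `0` to `c` must cross, while `I 0 = I c = 0`: the
mountain-pass geometry. Ekeland's principle applied to `γ ↦ max I ∘ γ` on the complete space of
paths, combined with a deformation of paths along a cut-off pseudo-gradient of `I`, yields a
Palais–Smale sequence at the minimax level `c* ≥ α`. As `JG` is invertible, `∇I = 2 JGᵀ G` vanishes
only where `G = 0`, i.e. at level `0 < c*`; so no subsequence converges, and in finite dimension the
sequence must leave every compact set.
-/

open Filter Metric Set Topology
open scoped unitInterval RealInnerProductSpace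

theorem BddBelow.exists_mem_forall_le_add {α : Type*} {f : α → ℝ} {s : Set α}
    (hf : BddBelow (f '' s)) (hs : s.Nonempty) {δ : ℝ} (hδ : 0 < δ) :
    ∃ x ∈ s, ∀ y ∈ s, f x ≤ f y + δ := by
  obtain ⟨_, ⟨x, hx, rfl⟩, hlt⟩ :=
    exists_lt_of_csInf_lt (hs.image f) (lt_add_of_pos_right (sInf (f '' s)) hδ)
  exact ⟨x, hx, fun y hy => by linarith [csInf_le hf (mem_image_of_mem f hy)]⟩

section Ekeland

variable {X : Type*} [MetricSpace X]

def ekelandSet (f : X → ℝ) (ε : ℝ) (x : X) : Set X := {y | f y + ε * dist x y ≤ f x}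

variable {f : X → ℝ} {ε : ℝ}

theorem self_mem_ekelandSet (x : X) : x ∈ ekelandSet f ε x := by
  simp [ekelandSet]

theorem ekelandSet_subset (hε : 0 ≤ ε) {x y : X} (hy : y ∈ ekelandSet f ε x) :
    ekelandSet f ε y ⊆ ekelandSet f ε x := fun z hz => by
  simp only [ekelandSet, mem_ofPred_eq] at *
  linarith [mul_le_mul_of_nonneg_left (dist_triangle x y z) hε]

theorem LowerSemicontinuous.isClosed_ekelandSet (hf : LowerSemicontinuous f) (x : X) :
    IsClosed (ekelandSet f ε x) :=
  (hf.add (continuous_const.mul (continuous_const.dist continuous_id)).lowerSemicontinuous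
    ).isClosed_preimage (f x)

theorem ekelandSet_subset_closedBall (hε : 0 < ε) {x : X} {r : ℝ}
    (h : ∀ y ∈ ekelandSet f ε x, f x ≤ f y + ε * r) : ekelandSet f ε x ⊆ closedBall x r :=
  fun y hy => by
    have := h y hy
    simp only [ekelandSet, mem_ofPred_eq] at hy
    rw [mem_closedBall, dist_comm]
    exact le_of_mul_le_mul_left (by linarith) hε

/-- **Ekeland's variational principle**, weak form. -/
theorem LowerSemicontinuous.exists_le_forall_le_add_mul_dist [CompleteSpace X]
    (hf : LowerSemicontinuous f) (hbdd : BddBelow (range f)) (hε : 0 < ε) (x₀ : X) :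
    ∃ x, f x ≤ f x₀ ∧ ∀ y, f x ≤ f y + ε * dist x y := by
  set S := ekelandSet f ε
  have hnext (n : ℕ) (x : X) : ∃ x' ∈ S x, ∀ y ∈ S x, f x' ≤ f y + ε * (1 / (n + 1)) :=
    (hbdd.mono (image_subset_range f _)).exists_mem_forall_le_add ⟨x, self_mem_ekelandSet x⟩
      (by positivity)
  choose next hnext_mem hnext_le using hnext
  let u : ℕ → X := fun n => Nat.rec x₀ next n
  have hanti : Antitone (fun n => S (u n)) :=
    antitone_nat_of_succ_le fun n => ekelandSet_subset hε.le (hnext_mem n (u n))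
  have hball (n : ℕ) : S (u (n + 1)) ⊆ closedBall (u (n + 1)) (1 / (n + 1)) :=
    ekelandSet_subset_closedBall hε fun y hy =>
      hnext_le n (u n) y (hanti n.le_succ hy)
  have hbounded (n : ℕ) : Bornology.IsBounded (S (u (n + 1))) :=
    isBounded_closedBall.subset (hball n)
  have hdiam : Tendsto (fun n : ℕ => diam (S (u (n + 1)))) atTop (𝓝 0) := by
    refine squeeze_zero (fun n => diam_nonneg) (fun n => ?_)
      (by simpa only [mul_zero] using tendsto_one_div_add_atTop_nhds_zero_nat.const_mul (2 : ℝ))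
    calc diam (S (u (n + 1))) ≤ diam (closedBall (u (n + 1)) (1 / (n + 1))) :=
          diam_mono (hball n) isBounded_closedBall
      _ ≤ 2 * (1 / (n + 1)) := diam_closedBall (by positivity)
  -- The sets `S (u (n + 1))` are nested, closed and of vanishing diameter; their common point
  -- is the required `x`.
  obtain ⟨x, hx⟩ := nonempty_iInter_of_nonempty_biInter
    (fun n => hf.isClosed_ekelandSet (u (n + 1))) hbounded
    (fun N => ⟨u (N + 1), mem_iInter₂.2 fun n hn =>
      hanti (Nat.succ_le_succ hn) (self_mem_ekelandSet _)⟩) hdiam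
  rw [mem_iInter] at hx
  refine ⟨x, ?_, fun y => ?_⟩
  · have hx₀ : x ∈ S x₀ := hanti (Nat.zero_le 1) (hx 0)
    simp only [S, ekelandSet, mem_ofPred_eq] at hx₀
    linarith [mul_nonneg hε.le (dist_nonneg (x := x₀) (y := x))]
  · by_contra! hy
    have hyS (n : ℕ) : y ∈ S (u (n + 1)) := ekelandSet_subset hε.le (hx n) hy.le
    have hxy : dist x y = 0 := le_antisymm
      (ge_of_tendsto' hdiam fun n => dist_le_diam_of_mem (hbounded n) (hx n) (hyS n))
      dist_nonneg
    rw [hxy, mul_zero, add_zero, dist_eq_zero.1 hxy] at hy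
    exact lt_irrefl _ hy

end Ekeland

section PathMax

variable {X : Type*} [TopologicalSpace X] {f : X → ℝ}

noncomputable def pathMax (f : X → ℝ) (γ : C(I, X)) : ℝ := ⨆ t, f (γ t)

theorem Continuous.bddAbove_range_comp_path (hf : Continuous f) (γ : C(I, X)) :
    BddAbove (range fun t => f (γ t)) :=
  (isCompact_range (hf.comp γ.continuous)).bddAbove

theorem le_pathMax (hf : Continuous f) (γ : C(I, X)) (t : I) : f (γ t) ≤ pathMax f γ :=
  le_ciSup (hf.bddAbove_range_comp_path γ) t

theorem pathMax_le {γ : C(I, X)} {m : ℝ} (h : ∀ t, f (γ t) ≤ m) : pathMax f γ ≤ m :=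
  ciSup_le h

theorem lowerSemicontinuous_pathMax (hf : Continuous f) : LowerSemicontinuous (pathMax f) :=
  lowerSemicontinuous_ciSup hf.bddAbove_range_comp_path
    fun t => (hf.comp (continuous_eval_const t)).lowerSemicontinuous

def pathsFromTo (a b : X) : Set C(I, X) := {γ | γ 0 = a ∧ γ 1 = b}

theorem isClosed_pathsFromTo [T1Space X] (a b : X) : IsClosed (pathsFromTo a b) :=
  (isClosed_singleton.preimage (continuous_eval_const 0)).inter
    (isClosed_singleton.preimage (continuous_eval_const 1))

theorem nonempty_pathsFromTo [PathConnectedSpace X] (a b : X) : (pathsFromTo a b).Nonempty :=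
  ⟨(PathConnectedSpace.somePath a b).toContinuousMap,
    (PathConnectedSpace.somePath a b).source, (PathConnectedSpace.somePath a b).target⟩

noncomputable def mountainPassLevel (f : X → ℝ) (a b : X) : ℝ :=
  ⨅ γ : pathsFromTo a b, pathMax f γ

theorem le_mountainPassLevel [PathConnectedSpace X] {a b : X} {α : ℝ}
    (h : ∀ γ ∈ pathsFromTo a b, α ≤ pathMax f γ) : α ≤ mountainPassLevel f a b :=
  have : Nonempty (pathsFromTo a b) := (nonempty_pathsFromTo a b).to_subtype
  le_ciInf fun γ => h γ γ.2

theorem exists_pos_forall_lt_norm_of_sub_lt_pathMax {F : Type*} [NormedAddCommGroup F]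
    {g : X → F} (hfc : Continuous f) (hg : Continuous g) (γ : C(I, X)) {ε : ℝ}
    (h0 : f (γ 0) < pathMax f γ) (h1 : f (γ 1) < pathMax f γ)
    (hcrit : ∀ t, f (γ t) = pathMax f γ → ε < ‖g (γ t)‖) :
    ∃ δ > 0, f (γ 0) ≤ pathMax f γ - δ ∧ f (γ 1) ≤ pathMax f γ - δ ∧
      ∀ t, pathMax f γ - δ < f (γ t) → ε < ‖g (γ t)‖ := by
  set K : Set I := {0, 1} ∪ {t | ‖g (γ t)‖ ≤ ε}
  have hK : IsCompact K := ((Finite.insert 0 (finite_singleton 1)).isClosed.union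
    (isClosed_le (hg.comp γ.continuous).norm continuous_const)).isCompact
  obtain ⟨δ, hδ, hδK⟩ := hK.exists_forall_le' (f := fun t => pathMax f γ - f (γ t))
    (continuous_const.sub (hfc.comp γ.continuous)).continuousOn (a := 0) fun t ht => by
      rcases ht with (rfl | rfl) | ht
      · exact sub_pos.2 h0
      · exact sub_pos.2 h1
      · exact sub_pos.2 <| (le_pathMax hfc γ t).lt_of_ne fun h => (hcrit t h).not_ge ht
  refine ⟨δ, hδ, ?_, ?_, fun t ht => ?_⟩
  · linarith [hδK 0 (by simp [K])]
  · linarith [hδK 1 (by simp [K])]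
  · by_contra! hle
    linarith [hδK t (Or.inr hle)]

end PathMax

theorem le_pathMax_of_forall_mem_sphere {E : Type*} [NormedAddCommGroup E] {f : E → ℝ}
    {a b : E} {γ : C(I, E)} (hγ : γ ∈ pathsFromTo a b) (hf : Continuous f) {r α : ℝ}
    (hr₀ : 0 ≤ r) (hr : r ≤ ‖b - a‖) (hα : ∀ x ∈ sphere a r, α ≤ f x) :
    α ≤ pathMax f γ := by
  obtain ⟨t, ht⟩ := intermediate_value_univ (0 : I) 1
    (continuous_norm.comp (γ.continuous.sub continuous_const) : Continuous fun t => ‖γ t - a‖)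
    (by simpa [hγ.1, hγ.2] using And.intro hr₀ hr)
  exact (hα (γ t) (mem_sphere_iff_norm.2 ht)).trans (le_pathMax hf γ t)

section Gradient

open InnerProductSpace

variable {E : Type*} [NormedAddCommGroup E] [InnerProductSpace ℝ E]

theorem exists_continuous_norm_le_one_inner_ge {X : Type*} [TopologicalSpace X] {v : X → E}
    (hv : Continuous v) {ε : ℝ} (hε : 0 < ε) :
    ∃ w : C(X, E), ∀ x, ‖w x‖ ≤ 1 ∧ 0 ≤ ⟪v x, w x⟫ ∧ (ε < ‖v x‖ → ε ≤ ⟪v x, w x⟫) := by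
  have hpos (x : X) : 0 < max ε ‖v x‖ := lt_max_of_lt_left hε
  refine ⟨⟨fun x => (max ε ‖v x‖)⁻¹ • v x,
    ((continuous_const.max hv.norm).inv₀ fun x => (hpos x).ne').smul hv⟩,
    fun x => ⟨?_, ?_, fun hlt => ?_⟩⟩
  · rw [ContinuousMap.coe_mk, norm_smul, norm_inv, Real.norm_of_nonneg (hpos x).le]
    exact inv_mul_le_one_of_le₀ (le_max_right _ _) (hpos x).le
  · rw [ContinuousMap.coe_mk, real_inner_smul_right]
    exact mul_nonneg (inv_nonneg.2 (hpos x).le) real_inner_self_nonneg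
  · rw [ContinuousMap.coe_mk, real_inner_smul_right, real_inner_self_eq_norm_sq,
      max_eq_right hlt.le, sq, inv_mul_cancel_left₀ (hε.trans hlt).ne']
    exact hlt.le

theorem exists_cutoff_pseudoGradient {X : Type*} [TopologicalSpace X] [NormalSpace X]
    {φ : X → ℝ} (hφ : Continuous φ) {v : X → E} (hv : Continuous v) {a b ε : ℝ} (hab : a < b)
    (hε : 0 < ε) (hvb : ∀ x, b ≤ φ x → ε < ‖v x‖) :
    ∃ V : C(X, E), ∀ x, ‖V x‖ ≤ 1 ∧ 0 ≤ ⟪v x, V x⟫ ∧ (b ≤ φ x → ε ≤ ⟪v x, V x⟫) ∧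
      (φ x ≤ a → V x = 0) := by
  obtain ⟨χ, hχa, hχb, hχI⟩ := exists_continuous_zero_one_of_isClosed
    (isClosed_le hφ continuous_const) (isClosed_le continuous_const hφ)
    (s := {x | φ x ≤ a}) (t := {x | b ≤ φ x})
    (disjoint_left.2 fun x ha hb => by simp only [mem_ofPred_eq] at ha hb; linarith)
  obtain ⟨w, hw⟩ := exists_continuous_norm_le_one_inner_ge hv hε
  refine ⟨⟨fun x => χ x • w x, by fun_prop⟩, fun x => ⟨?_, ?_, fun hx => ?_, fun hx => ?_⟩⟩
  · rw [ContinuousMap.coe_mk, norm_smul, Real.norm_of_nonneg (hχI x).1]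
    exact mul_le_one₀ (hχI x).2 (norm_nonneg _) (hw x).1
  · rw [ContinuousMap.coe_mk, real_inner_smul_right]
    exact mul_nonneg (hχI x).1 (hw x).2.1
  · rw [ContinuousMap.coe_mk, real_inner_smul_right, hχb hx, Pi.one_apply, one_mul]
    exact (hw x).2.2 (hvb x hx)
  · simp [hχa hx]

variable [CompleteSpace E] {f : E → ℝ} {g : E → E}

theorem image_add_le_add_inner_add_mul_norm {x h : E} {C : ℝ}
    (hf : ∀ y ∈ segment ℝ x (x + h), HasGradientAt f (g y) y)
    (hC : ∀ y ∈ segment ℝ x (x + h), ‖g y - g x‖ ≤ C) :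
    f (x + h) ≤ f x + ⟪g x, h⟫ + C * ‖h‖ := by
  have := (convex_segment x (x + h)).norm_image_sub_le_of_norm_hasFDerivWithin_le'
    (φ := toDual ℝ E (g x)) (fun y hy => (hf y hy).hasFDerivAt.hasFDerivWithinAt)
    (fun y hy => by rw [← map_sub, LinearIsometryEquiv.norm_map]; exact hC y hy)
    (left_mem_segment ℝ _ _) (right_mem_segment ℝ _ _)
  rw [add_sub_cancel_left, toDual_apply_apply, Real.norm_eq_abs] at this
  linarith [le_abs_self (f (x + h) - f x - ⟪g x, h⟫)]

theorem IsCompact.exists_pos_forall_image_add_le {K : Set E} (hK : IsCompact K)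
    (hf : ∀ x, HasGradientAt f (g x) x) (hg : Continuous g) {η : ℝ} (hη : 0 < η) :
    ∃ r > 0, ∀ x ∈ K, ∀ h : E, ‖h‖ ≤ r → f (x + h) ≤ f x + ⟪g x, h⟫ + η * ‖h‖ := by
  obtain ⟨ρ, hρ, hgρ⟩ := mem_uniformity_dist.1 <| hK.uniformContinuousAt_of_continuousAt g
    (fun x _ => hg.continuousAt) (dist_mem_uniformity hη)
  refine ⟨ρ / 2, half_pos hρ, fun x hx h hh =>
    image_add_le_add_inner_add_mul_norm (fun y _ => hf y) fun y hy => ?_⟩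
  have hy : y ∈ closedBall x ‖h‖ := (convex_closedBall x ‖h‖).segment_subset
    (mem_closedBall_self (norm_nonneg h)) (by simp [mem_closedBall]) hy
  rw [← dist_eq_norm, dist_comm]
  exact (hgρ (by rw [dist_comm]; exact (mem_closedBall.1 hy).trans_lt (by linarith)) hx).le

/-- Deformation lemma: move `γ` by `-s V` for a pseudo-gradient `V` of `f` cut off below level
`max - δ`. Where `f ∘ γ ≥ max - δ / 2` the value drops by `3 ε s / 4`; elsewhere it stays below
`max - δ / 2 + ε s / 4`. -/
theorem exists_dist_le_pathMax_le_sub (hf : ∀ x, HasGradientAt f (g x) x) (hg : Continuous g)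
    (γ : C(I, E)) {ε : ℝ} (hε : 0 < ε) (h0 : f (γ 0) < pathMax f γ) (h1 : f (γ 1) < pathMax f γ)
    (hcrit : ∀ t, f (γ t) = pathMax f γ → ε < ‖g (γ t)‖) :
    ∃ s > 0, ∃ γ' : C(I, E), γ' 0 = γ 0 ∧ γ' 1 = γ 1 ∧ dist γ' γ ≤ s ∧
      pathMax f γ' ≤ pathMax f γ - ε / 2 * s := by
  have hfc : Continuous f := continuous_iff_continuousAt.2 fun x => (hf x).continuousAt
  obtain ⟨δ, hδ, hδ0, hδ1, hδg⟩ :=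
    exists_pos_forall_lt_norm_of_sub_lt_pathMax hfc hg γ h0 h1 hcrit
  obtain ⟨V, hV⟩ := exists_cutoff_pseudoGradient (φ := fun t => f (γ t))
    (v := fun t => g (γ t)) (hfc.comp γ.continuous) (hg.comp γ.continuous)
    (by linarith : pathMax f γ - δ < pathMax f γ - δ / 2) hε fun t ht => hδg t (by linarith)
  obtain ⟨r, hr, hfr⟩ := (isCompact_range γ.continuous).exists_pos_forall_image_add_le hf hg
    (η := ε / 4) (by positivity)
  set s := min r (δ / (2 * ε))
  have hs : 0 < s := lt_min hr (by positivity)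
  have hstep (t : I) : ‖-(s • V t)‖ ≤ s := by
    rw [norm_neg, norm_smul, Real.norm_of_nonneg hs.le]
    exact mul_le_of_le_one_right hs.le (hV t).1
  refine ⟨s, hs, ⟨fun t => γ t + -(s • V t), by fun_prop⟩, ?_, ?_, ?_, pathMax_le fun t => ?_⟩
  · simp [(hV 0).2.2.2 hδ0]
  · simp [(hV 1).2.2.2 hδ1]
  · refine (ContinuousMap.dist_le hs.le).2 fun t => ?_
    change dist (γ t + _) (γ t) ≤ s
    rw [dist_eq_norm, add_sub_cancel_left]
    exact hstep t
  · have hT := hfr (γ t) (mem_range_self t) _ ((hstep t).trans (min_le_left _ _))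
    rw [inner_neg_right, real_inner_smul_right] at hT
    have hηs : ε / 4 * ‖-(s • V t)‖ ≤ ε / 4 * s := by gcongr; exact hstep t
    refine hT.trans ?_
    by_cases ht : pathMax f γ - δ / 2 ≤ f (γ t)
    · linarith [le_pathMax hfc γ t, mul_le_mul_of_nonneg_left ((hV t).2.2.1 ht) hs.le,
        mul_pos hε hs]
    · have hs_le : s ≤ δ / (2 * ε) := min_le_right _ _
      rw [le_div_iff₀ (by positivity)] at hs_le
      linarith [mul_nonneg hs.le (hV t).2.1]

/-- Ekeland's principle on the space of paths gives a nearly minimising path that no deformation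
lowers by more than `ε / 4` per unit of distance; by the deformation lemma one of its maximum
points is then almost critical. -/
theorem exists_near_mountainPassLevel (hf : ∀ x, HasGradientAt f (g x) x) (hg : Continuous g)
    {a b : E} {α : ℝ} (hα : ∀ γ ∈ pathsFromTo a b, α ≤ pathMax f γ) (ha : f a < α)
    (hb : f b < α) {ε : ℝ} (hε : 0 < ε) :
    ∃ x, mountainPassLevel f a b ≤ f x ∧ f x ≤ mountainPassLevel f a b + ε ∧ ‖g x‖ ≤ ε := by
  have hfc : Continuous f := continuous_iff_continuousAt.2 fun x => (hf x).continuousAt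
  have : CompleteSpace (pathsFromTo a b) := (isClosed_pathsFromTo a b).completeSpace_coe
  have : Nonempty (pathsFromTo a b) := (nonempty_pathsFromTo a b).to_subtype
  let Φ : pathsFromTo a b → ℝ := fun γ => pathMax f γ
  have hbdd : BddBelow (range Φ) := ⟨α, forall_mem_range.2 fun γ => hα γ γ.2⟩
  obtain ⟨γ₀, hγ₀⟩ : ∃ γ₀, Φ γ₀ < mountainPassLevel f a b + ε :=
    exists_lt_of_ciInf_lt (lt_add_of_pos_right _ hε)
  obtain ⟨γ, hγγ₀, hγ⟩ := ((lowerSemicontinuous_pathMax hfc).comp continuous_subtype_val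
    ).exists_le_forall_le_add_mul_dist hbdd (by positivity : (0 : ℝ) < ε / 4) γ₀
  by_contra! hcrit
  obtain ⟨s, hs, γ', h0, h1, hdist, hmax⟩ := exists_dist_le_pathMax_le_sub hf hg γ hε
    (by rw [γ.2.1]; exact ha.trans_le (hα γ γ.2)) (by rw [γ.2.2]; exact hb.trans_le (hα γ γ.2))
    fun t ht => hcrit _ (by rw [ht]; exact ciInf_le hbdd γ) (by rw [ht]; exact hγγ₀.trans hγ₀.le)
  have := hγ ⟨γ', h0.trans γ.2.1, h1.trans γ.2.2⟩
  rw [Function.comp_apply, Function.comp_apply, Subtype.dist_eq, dist_comm] at this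
  linarith [mul_le_mul_of_nonneg_left hdist (by positivity : (0 : ℝ) ≤ ε / 4), mul_pos hε hs]

theorem exists_seq_tendsto_mountainPassLevel (hf : ∀ x, HasGradientAt f (g x) x)
    (hg : Continuous g) {a b : E} {α : ℝ} (hα : ∀ γ ∈ pathsFromTo a b, α ≤ pathMax f γ)
    (ha : f a < α) (hb : f b < α) :
    ∃ u : ℕ → E, Tendsto (fun k => f (u k)) atTop (𝓝 (mountainPassLevel f a b)) ∧
      Tendsto (fun k => g (u k)) atTop (𝓝 0) := by
  choose u hlow hup hgrad using fun k : ℕ =>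
    exists_near_mountainPassLevel hf hg hα ha hb (Nat.one_div_pos_of_nat (n := k))
  refine ⟨u, tendsto_of_tendsto_of_tendsto_of_le_of_le tendsto_const_nhds ?_ hlow hup,
    squeeze_zero_norm hgrad tendsto_one_div_add_atTop_nhds_zero_nat⟩
  simpa using (tendsto_const_nhds (x := mountainPassLevel f a b)).add
    tendsto_one_div_add_atTop_nhds_zero_nat

end Gradient

theorem tendsto_cocompact_of_tendsto_of_forall_ne {X Y ι : Type*} [TopologicalSpace X]
    [TopologicalSpace Y] [T2Space Y] {F : X → Y} (hF : Continuous F) {u : ι → X} {l : Filter ι}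
    {y : Y} (hu : Tendsto (fun i => F (u i)) l (𝓝 y)) (hy : ∀ x, F x ≠ y) :
    Tendsto u l (cocompact X) := by
  refine hasBasis_cocompact.tendsto_right_iff.2 fun K hK => ?_
  have : (F '' K)ᶜ ∈ 𝓝 y :=
    (hK.image hF).isClosed.isOpen_compl.mem_nhds fun ⟨x, _, hx⟩ => hy x hx
  filter_upwards [hu this] with i hi hiK using hi ⟨u i, hiK, rfl⟩

theorem Filter.Eventually.exists_forall_mem_sphere {E : Type*} [NormedAddCommGroup E]
    {p : E → Prop} {x : E} (h : ∀ᶠ y in 𝓝[≠] x, p y) {R : ℝ} (hR : 0 < R) :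
    ∃ r, 0 < r ∧ r < R ∧ ∀ y ∈ sphere x r, p y := by
  obtain ⟨ε, hε, hball⟩ := mem_nhdsWithin_iff.1 h
  refine ⟨min (ε / 2) (R / 2), by positivity, (min_le_right _ _).trans_lt (half_lt_self hR),
    fun y hy => hball ⟨?_, ?_⟩⟩
  · rw [mem_ball, mem_sphere.1 hy]
    exact (min_le_left _ _).trans_lt (half_lt_self hε)
  · rintro rfl
    simp only [mem_sphere, dist_self] at hy
    exact (lt_min (half_pos hε) (half_pos hR)).ne hy

theorem HasFDerivAt.eventually_ne_of_det_ne_zero {E : Type*} [NormedAddCommGroup E]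
    [NormedSpace ℝ E] [FiniteDimensional ℝ E] {G : E → E} {A : E →L[ℝ] E} {x : E}
    (hG : HasFDerivAt G A x) (hA : A.det ≠ 0) : ∀ᶠ y in 𝓝[≠] x, G y ≠ G x :=
  hG.eventually_ne ⟨_, (A.toContinuousLinearEquivOfDetNeZero hA).antilipschitz⟩

section Adjoint

open ContinuousLinearMap

variable {E F : Type*} [NormedAddCommGroup E] [InnerProductSpace ℝ E] [CompleteSpace E]
  [NormedAddCommGroup F] [InnerProductSpace ℝ F] [CompleteSpace F]

theorem HasFDerivAt.hasGradientAt_norm_sq {G : E → F} {A : E →L[ℝ] F} {x : E}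
    (hG : HasFDerivAt G A x) :
    HasGradientAt (fun y => ‖G y‖ ^ 2) ((2 : ℝ) • adjoint A (G x)) x := by
  rw [hasGradientAt_iff_hasFDerivAt]
  refine hG.norm_sq.congr_fderiv ?_
  ext v
  simp [adjoint_inner_left]

theorem eq_zero_of_adjoint_apply_eq_zero {A : E →L[ℝ] F} (hA : Function.Surjective A) {v : F}
    (hv : adjoint A v = 0) : v = 0 := by
  obtain ⟨w, rfl⟩ := hA v
  rw [← inner_self_eq_zero (𝕜 := ℝ), ← adjoint_inner_left, hv, inner_zero_left]

end Adjoint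

theorem exists_unbounded_palais_smale_sequence_general
    {n : ℕ} (G : EuclideanSpace ℝ (Fin n) → EuclideanSpace ℝ (Fin n))
    (hG : ContDiff ℝ 1 G)
    (hdet : ∀ X : EuclideanSpace ℝ (Fin n), LinearMap.det (fderiv ℝ G X).toLinearMap ≠ 0)
    (h0 : G 0 = 0) (c : EuclideanSpace ℝ (Fin n)) (hc : c ≠ 0) (hGc : G c = 0) :
    ∃ cstar > (0 : ℝ), ∃ X : ℕ → EuclideanSpace ℝ (Fin n),
      Tendsto (fun k => ‖X k‖) atTop atTop ∧
      Tendsto (fun k => ‖G (X k)‖ ^ 2) atTop (nhds cstar) ∧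
      Tendsto (fun k => (2 : ℝ) •
          (ContinuousLinearMap.adjoint (fderiv ℝ G (X k))) (G (X k))) atTop (nhds 0) := by
  have hderiv (x) : HasFDerivAt G (fderiv ℝ G x) x :=
    (hG.differentiable one_ne_zero x).hasFDerivAt
  have hI : Continuous fun x => ‖G x‖ ^ 2 := hG.continuous.norm.pow 2
  have hadj : Continuous fun x => ContinuousLinearMap.adjoint (fderiv ℝ G x) :=
    ContinuousLinearMap.adjoint.continuous.comp (hG.continuous_fderiv one_ne_zero)
  have hgrad : Continuous fun x => (2 : ℝ) • ContinuousLinearMap.adjoint (fderiv ℝ G x) (G x) :=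
    (hadj.clm_apply hG.continuous).fun_const_smul 2
  obtain ⟨r, hr, hrc, hGr⟩ := ((hderiv 0).eventually_ne_of_det_ne_zero (hdet 0)
    ).exists_forall_mem_sphere (norm_pos_iff.2 hc)
  obtain ⟨α, hα, hαr⟩ := (isCompact_sphere 0 r).exists_forall_le' hI.continuousOn (a := 0)
    fun x hx => pow_pos (norm_pos_iff.2 (h0 ▸ hGr x hx)) 2
  have hpaths (γ) (hγ : γ ∈ pathsFromTo 0 c) : α ≤ pathMax (fun x => ‖G x‖ ^ 2) γ :=
    le_pathMax_of_forall_mem_sphere hγ hI hr.le (by simpa using hrc.le) hαr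
  obtain ⟨X, hXI, hXg⟩ := exists_seq_tendsto_mountainPassLevel
    (fun x => (hderiv x).hasGradientAt_norm_sq) hgrad hpaths (by simpa [h0]) (by simpa [hGc])
  have hlevel := hα.trans_le (le_mountainPassLevel hpaths)
  refine ⟨_, hlevel, X, tendsto_norm_cocompact_atTop.comp
    (tendsto_cocompact_of_tendsto_of_forall_ne (hI.prodMk hgrad) (hXI.prodMk_nhds hXg) ?_),
    hXI, hXg⟩
  intro x hx
  obtain ⟨hIx, hgx⟩ := Prod.mk.inj hx
  have hGx : G x = 0 := eq_zero_of_adjoint_apply_eq_zero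
    ((fderiv ℝ G x).toContinuousLinearEquivOfDetNeZero (hdet x)).surjective
    ((smul_eq_zero.1 hgx).resolve_left two_ne_zero)
  simp [hGx] at hIx
  linarith

/-- Let `G : ℝⁿ → ℝⁿ` (n ≥ 2) be `C¹` with `det JG(X) ≠ 0` for every `X`,
`G(0) = 0` and `G(c) = 0` for some `c ≠ 0`. Set `I(X) = ‖G(X)‖²`. Then there exist `c* > 0`
and a sequence `(X_k)` with `‖X_k‖ → ∞`, `I(X_k) → c*`, and
`∇I(X_k) = 2 JG(X_k)ᵀ G(X_k) → 0` (here `JG(X)ᵀ G(X)` is the adjoint of the derivative of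
`G` at `X` applied to `G(X)`). -/
theorem exists_unbounded_palais_smale_sequence
    {n : ℕ} (hn : 2 ≤ n) (G : EuclideanSpace ℝ (Fin n) → EuclideanSpace ℝ (Fin n))
    (hG : ContDiff ℝ 1 G)
    (hdet : ∀ X : EuclideanSpace ℝ (Fin n), LinearMap.det (fderiv ℝ G X).toLinearMap ≠ 0)
    (h0 : G 0 = 0) (c : EuclideanSpace ℝ (Fin n)) (hc : c ≠ 0) (hGc : G c = 0) :
    ∃ cstar > (0 : ℝ), ∃ X : ℕ → EuclideanSpace ℝ (Fin n),
      Tendsto (fun k => ‖X k‖) atTop atTop ∧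
      Tendsto (fun k => ‖G (X k)‖ ^ 2) atTop (nhds cstar) ∧
      Tendsto (fun k => (2 : ℝ) •
          (ContinuousLinearMap.adjoint (fderiv ℝ G (X k))) (G (X k))) atTop (nhds 0) :=
  exists_unbounded_palais_smale_sequence_general G hG hdet h0 c hc hGc
end

section
/- Let G : ℝⁿ → ℝⁿ be a C¹ map, let c* > 0, and let (X_k) be a sequence in ℝⁿ such that ‖G(X_k)‖² → c* and the gradient ∇I(X_k) of I(X) = ‖G(X)‖² at X_k tends to 0. For each k let μ₁(X_k) denote the smallest eigenvalue of the real symmetric matrix JG(X_k) + JG(X_k)^T. Then limsup_{k→∞} μ₁(X_k) ≤ 0; in particular, for every ε > 0 there are infinitely many k with μ₁(X_k) < ε. -/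
/-!
Write `A = JG(X_k)`, `Y = G(X_k)` and `g = 2 Aᵀ Y = ∇I(X_k)`. Since `A + Aᵀ` is symmetric, its
smallest eigenvalue bounds its Rayleigh quotient from below, and `⟪(A + Aᵀ) Y, Y⟫ = ⟪g, Y⟫`, so
`μ₁(X_k) ‖Y‖² ≤ ⟪g, Y⟫`. The right-hand side tends to `0` because `g → 0` while `‖Y‖` stays
bounded, and `‖Y‖² → c* > 0`; hence `μ₁(X_k) < ε` eventually, for every `ε > 0`.
-/

open Filter Topology

open scoped RealInnerProductSpace

section Rayleigh

variable {E : Type*} [NormedAddCommGroup E] [InnerProductSpace ℝ E]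

theorem LinearMap.IsSymmetric.mul_norm_sq_le_inner_apply_self [FiniteDimensional ℝ E]
    {T : E →ₗ[ℝ] E} (hT : T.IsSymmetric) {μ : ℝ}
    (hμ : ∀ ν : ℝ, (∃ v : E, v ≠ 0 ∧ T v = ν • v) → μ ≤ ν) (y : E) :
    μ * ‖y‖ ^ 2 ≤ ⟪T y, y⟫ := by
  set b := hT.eigenvectorBasis rfl
  set ν := hT.eigenvalues rfl
  have hb : ∀ i, T (b i) = ν i • b i := hT.apply_eigenvectorBasis rfl
  have hTy : ⟪T y, y⟫ = ∑ i, ν i * ⟪b i, y⟫ ^ 2 := by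
    rw [← b.sum_inner_mul_inner (T y) y]
    refine Finset.sum_congr rfl fun i _ => ?_
    rw [hT, hb, real_inner_smul_right, real_inner_comm y]
    ring
  have hy : ‖y‖ ^ 2 = ∑ i, ⟪b i, y⟫ ^ 2 := by
    rw [← real_inner_self_eq_norm_sq, ← b.sum_inner_mul_inner y y]
    refine Finset.sum_congr rfl fun i _ => ?_
    rw [real_inner_comm y, sq]
  rw [hTy, hy, Finset.mul_sum]
  exact Finset.sum_le_sum fun i _ =>
    mul_le_mul_of_nonneg_right (hμ _ ⟨b i, b.toBasis.ne_zero i, hb i⟩) (sq_nonneg _)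

variable [CompleteSpace E]

theorem ContinuousLinearMap.isSymmetric_add_adjoint (A : E →L[ℝ] E) :
    ((A + adjoint A : E →L[ℝ] E) : E →ₗ[ℝ] E).IsSymmetric :=
  (IsSelfAdjoint.add_star_self A).isSymmetric

theorem ContinuousLinearMap.inner_add_adjoint_apply_self (A : E →L[ℝ] E) (y : E) :
    ⟪A y + adjoint A y, y⟫ = ⟪(2 : ℝ) • adjoint A y, y⟫ := by
  rw [inner_add_left, real_inner_smul_left, two_mul, A.adjoint_inner_left, real_inner_comm (A y)]

end Rayleigh

theorem eventually_lt_of_mul_le_of_tendsto {ι : Type*} {l : Filter ι} {a r b : ι → ℝ} {c : ℝ}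
    (hc : 0 < c) (hr : Tendsto r l (𝓝 c)) (hb : Tendsto b l (𝓝 0))
    (hab : ∀ k, a k * r k ≤ b k) : ∀ ε > 0, ∀ᶠ k in l, a k < ε := by
  intro ε hε
  filter_upwards [hr.eventually_const_lt (half_lt_self hc),
    hb.eventually_lt_const (by positivity : 0 < ε * (c / 2))] with k hrk hbk
  have : a k * r k < ε * r k := calc
    a k * r k ≤ b k := hab k
    _ < ε * (c / 2) := hbk
    _ < ε * r k := by gcongr
  exact lt_of_mul_lt_mul_right this (by linarith)

theorem Real.limsup_nonpos_of_forall_eventually_lt {ι : Type*} {l : Filter ι} {u : ι → ℝ}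
    (h : ∀ ε > 0, ∀ᶠ k in l, u k < ε) : limsup u l ≤ 0 := by
  rw [limsup_eq]
  by_cases hbdd : BddBelow {a | ∀ᶠ k in l, u k ≤ a}
  · refine le_of_forall_pos_le_add fun ε hε => ?_
    rw [zero_add]
    exact csInf_le hbdd ((h ε hε).mono fun _ => le_of_lt)
  · rw [Real.sInf_of_not_bddBelow hbdd]

theorem limsup_smallest_eigenvalue_nonpos_general
    {n : ℕ} (G : EuclideanSpace ℝ (Fin n) → EuclideanSpace ℝ (Fin n))
    (cstar : ℝ) (hcstar : 0 < cstar)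
    (X : ℕ → EuclideanSpace ℝ (Fin n))
    (hI : Tendsto (fun k => ‖G (X k)‖ ^ 2) atTop (nhds cstar))
    (hgrad : Tendsto (fun k => (2 : ℝ) •
        (ContinuousLinearMap.adjoint (fderiv ℝ G (X k))) (G (X k))) atTop (nhds 0))
    (μ : ℕ → ℝ)
    (hμ : ∀ k : ℕ,
      (∃ v : EuclideanSpace ℝ (Fin n), v ≠ 0 ∧
        (fderiv ℝ G (X k)) v + (ContinuousLinearMap.adjoint (fderiv ℝ G (X k))) v = μ k • v) ∧
      (∀ ν : ℝ, (∃ v : EuclideanSpace ℝ (Fin n), v ≠ 0 ∧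
          (fderiv ℝ G (X k)) v + (ContinuousLinearMap.adjoint (fderiv ℝ G (X k))) v = ν • v) →
        μ k ≤ ν)) :
    Filter.limsup μ atTop ≤ 0 ∧ ∀ ε > (0 : ℝ), {k : ℕ | μ k < ε}.Infinite := by
  have hnorm : Tendsto (fun k => ‖G (X k)‖) atTop (𝓝 √cstar) := by
    simpa only [Real.sqrt_sq (norm_nonneg _)] using hI.sqrt
  have hinner := hgrad.op_zero_isBoundedUnder_le (g := fun k => G (X k))
    hnorm.isBoundedUnder_le (fun g y => ⟪g, y⟫) norm_inner_le_norm
  have hrayleigh (k : ℕ) : μ k * ‖G (X k)‖ ^ 2 ≤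
      ⟪(2 : ℝ) • ContinuousLinearMap.adjoint (fderiv ℝ G (X k)) (G (X k)), G (X k)⟫ := by
    rw [← ContinuousLinearMap.inner_add_adjoint_apply_self]
    exact (fderiv ℝ G (X k)).isSymmetric_add_adjoint.mul_norm_sq_le_inner_apply_self
      (hμ k).2 _
  have key := eventually_lt_of_mul_le_of_tendsto hcstar hI hinner hrayleigh
  exact ⟨Real.limsup_nonpos_of_forall_eventually_lt key,
    fun ε hε => Nat.frequently_atTop_iff_infinite.1 (key ε hε).frequently⟩

/-- Let `G : ℝⁿ → ℝⁿ` be `C¹`, `c* > 0`, and `(X_k)` a sequence with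
`‖G(X_k)‖² → c*` and `∇I(X_k) = 2 JG(X_k)ᵀ G(X_k) → 0`, where `I(X) = ‖G(X)‖²`.
If `μ₁(X_k)` denotes the smallest eigenvalue of the symmetric operator
`JG(X_k) + JG(X_k)ᵀ` (the derivative of `G` at `X_k` plus its adjoint), then
`limsup μ₁(X_k) ≤ 0`; in particular for every `ε > 0` there are infinitely many `k` with
`μ₁(X_k) < ε`. -/
theorem limsup_smallest_eigenvalue_nonpos
    {n : ℕ} (G : EuclideanSpace ℝ (Fin n) → EuclideanSpace ℝ (Fin n))
    (hG : ContDiff ℝ 1 G) (cstar : ℝ) (hcstar : 0 < cstar)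
    (X : ℕ → EuclideanSpace ℝ (Fin n))
    (hI : Tendsto (fun k => ‖G (X k)‖ ^ 2) atTop (nhds cstar))
    (hgrad : Tendsto (fun k => (2 : ℝ) •
        (ContinuousLinearMap.adjoint (fderiv ℝ G (X k))) (G (X k))) atTop (nhds 0))
    (μ : ℕ → ℝ)
    (hμ : ∀ k : ℕ,
      (∃ v : EuclideanSpace ℝ (Fin n), v ≠ 0 ∧
        (fderiv ℝ G (X k)) v + (ContinuousLinearMap.adjoint (fderiv ℝ G (X k))) v = μ k • v) ∧
      (∀ ν : ℝ, (∃ v : EuclideanSpace ℝ (Fin n), v ≠ 0 ∧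
          (fderiv ℝ G (X k)) v + (ContinuousLinearMap.adjoint (fderiv ℝ G (X k))) v = ν • v) →
        μ k ≤ ν)) :
    Filter.limsup μ atTop ≤ 0 ∧ ∀ ε > (0 : ℝ), {k : ℕ | μ k < ε}.Infinite :=
  limsup_smallest_eigenvalue_nonpos_general G cstar hcstar X hI hgrad μ hμ
end
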